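/- Consider the Darwinian (1+1) EA on DLB_k over {0,1}^n and fix j ∈ [0..n/k−1]. Let X be the first individual generated by the algorithm (the random initial individual or a mutation offspring) that has at least j leading all-ones blocks. Then, conditional on X having at least j leading all-ones blocks, the k bits X_{jk+1}, …, X_{jk+k} are independent and uniformly distributed on {0,1}; in particular, they are all zero with probability 2^{−k}. -/

import Mathlib

open Finset
open scoped ENNReal

noncomputable section

/-- Bit strings of length `n`. -/
abbrev BitStr (n : ℕ) := Fin n → Bool

/-- The all-ones string. -/
def allOnes (n : ℕ) : BitStr n := fun _ => true

/-- The number of ones in the `ℓ`-th block (`0`-indexed), i.e. among the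
(`0`-indexed) positions `ℓ*k, …, ℓ*k + k - 1`. -/
def blockOnes (k n : ℕ) (x : BitStr n) (ℓ : ℕ) : ℕ :=
  (Finset.univ.filter fun i : Fin n => ℓ * k ≤ i.1 ∧ i.1 < ℓ * k + k ∧ x i = true).card

/-- The number of leading all-ones blocks of `x` (at most `n / k`).  For
`x ≠ allOnes n` (and `k ∣ n`) this is `c(x) - 1`, the (`0`-indexed) index of the
critical block. -/
def leadBlocks (k n : ℕ) (x : BitStr n) : ℕ :=
  Nat.findGreatest (fun j => ∀ ℓ < j, blockOnes k n x ℓ = k) (n / k)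

/-- The DeceptiveLeadingBlocks function with block length `k`:
`DLB_k(x) = k (c(x) - 1) + (k - 1 - ‖x_{B_{c(x)}}‖₁)` for `x` not the all-ones
string, and `DLB_k` of the all-ones string is `n`. -/
def dlb (k n : ℕ) (x : BitStr n) : ℕ :=
  if x = allOnes n then n
  else k * leadBlocks k n x + (k - 1 - blockOnes k n x (leadBlocks k n x))

/-- Bitwise mutation with rate `1/n`: each bit is flipped independently with
probability `1/n`. -/
def mutatePMF (n : ℕ) (x : BitStr n) : PMF (BitStr n) :=
  PMF.ofFintype
    (fun y => ∏ i, if y i = x i then 1 - (n : ℝ≥0∞)⁻¹ else (n : ℝ≥0∞)⁻¹)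
    (by
      classical
      have key := (Fintype.prod_sum
        (fun (i : Fin n) (b : Bool) => if b = x i then 1 - (n : ℝ≥0∞)⁻¹ else (n : ℝ≥0∞)⁻¹)).symm
      rw [key]
      refine Finset.prod_eq_one fun i _ => ?_
      have h1 : (1 : ℝ≥0∞) ≤ (n : ℝ≥0∞) := by exact_mod_cast i.pos
      have hinv : (n : ℝ≥0∞)⁻¹ ≤ 1 := ENNReal.inv_le_one.mpr h1
      rcases Bool.eq_false_or_eq_true (x i) with hx | hx <;>
        simp [Fintype.sum_bool, hx, tsub_add_cancel_of_le hinv, add_tsub_cancel_of_le hinv])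

/-- The probability of an event `E` under a probability mass function `p`. -/
def prOf {α : Type*} (p : PMF α) (E : Set α) : ℝ≥0∞ :=
  ∑' a, E.indicator (fun a => p a) a

/-- The joint distribution, after `t` iterations of the Darwinian (1+1) EA on
`dlb k n`, of the current parent together with the list of all individuals
generated so far (most recent first), namely the random initial individual and
all mutation offspring. -/
def darwinHist (k n : ℕ) : ℕ → PMF (BitStr n × List (BitStr n))
  | 0 => (PMF.uniformOfFintype (BitStr n)).map fun x => (x, [x])
  | t + 1 => (darwinHist k n t).bind fun s =>
      (mutatePMF n s.1).map fun y =>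
        (if dlb k n s.1 ≤ dlb k n y then y else s.1, y :: s.2)

namespace DFH

def par (k n : ℕ) : List (BitStr n) → BitStr n
  | [] => allOnes n
  | [x] => x
  | y :: x :: l => if dlb k n (par k n (x :: l)) ≤ dlb k n y then y else par k n (x :: l)

def q (k n : ℕ) : List (BitStr n) → ℝ≥0∞
  | [] => 0
  | [_] => ((Fintype.card (BitStr n) : ℕ) : ℝ≥0∞)⁻¹
  | y :: x :: l => mutatePMF n (par k n (x :: l)) y * q k n (x :: l)

lemma par_mem (k n : ℕ) : ∀ l : List (BitStr n), l ≠ [] → par k n l ∈ l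
  | [x], _ => by simp [par]
  | y :: x :: l, _ => by
      rw [par]
      split
      · exact List.mem_cons_self
      · exact List.mem_cons_of_mem _ (par_mem k n (x :: l) (by simp))

lemma mutatePMF_apply (n : ℕ) (x y : BitStr n) :
    mutatePMF n x y = ∏ i, if y i = x i then 1 - (n : ℝ≥0∞)⁻¹ else (n : ℝ≥0∞)⁻¹ := by
  simp [mutatePMF, PMF.ofFintype_apply]

lemma darwinHist_apply (k n : ℕ) (T : ℕ) (x : BitStr n) (l : List (BitStr n)) :
    darwinHist k n T (x, l) =
      if x = par k n l ∧ l.length = T + 1 then q k n l else 0 := by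
  induction T generalizing x l with
  | zero =>
    rw [darwinHist, PMF.map_apply]
    rw [tsum_eq_single x (by
      intro a ha
      rw [if_neg]
      simp only [Prod.mk.injEq, not_and]
      rintro rfl
      exact absurd rfl ha)]
    simp only [Prod.mk.injEq, true_and, PMF.uniformOfFintype_apply]
    by_cases hl : l = [x]
    · subst hl
      simp [par, q]
    · rw [if_neg hl, if_neg]
      rintro ⟨hx, hlen⟩
      obtain ⟨a, rfl⟩ := List.length_eq_one_iff.1 hlen
      exact hl (by rw [show x = a from hx ▸ rfl])
  | succ T IH =>
    rw [darwinHist, PMF.bind_apply]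
    match l with
    | [] =>
      rw [if_neg (by simp)]
      refine ENNReal.tsum_eq_zero.2 fun s => ?_
      rw [PMF.map_apply]
      refine mul_eq_zero.2 (Or.inr (ENNReal.tsum_eq_zero.2 fun y => ?_))
      rw [if_neg]
      simp only [Prod.mk.injEq, not_and]
      intro _ h
      exact absurd h (by simp)
    | [y0] =>
      rw [if_neg (by simp)]
      refine ENNReal.tsum_eq_zero.2 fun s => ?_
      rcases s with ⟨sx, sl⟩
      rcases List.eq_nil_or_concat sl with hsl | _
      all_goals by_cases hsl' : sl = []
      all_goals try (subst hsl'
                     rw [IH]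
                     rw [if_neg (by simp)]
                     exact zero_mul _)
      all_goals refine mul_eq_zero.2 (Or.inr ?_)
      all_goals rw [PMF.map_apply]
      all_goals refine ENNReal.tsum_eq_zero.2 fun y => ?_
      all_goals rw [if_neg]
      all_goals simp only [Prod.mk.injEq, not_and]
      all_goals intro _ h
      all_goals rw [List.cons.injEq] at h
      all_goals exact hsl' h.2.symm
    | y0 :: x1 :: l'' =>
      rw [tsum_eq_single (par k n (x1 :: l''), x1 :: l'') (by
        rintro ⟨sx, sl⟩ hs
        by_cases h2 : sl = x1 :: l''
        · subst h2
          have hsx : sx ≠ par k n (x1 :: l'') := fun h => hs (by rw [h])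
          rw [IH, if_neg (fun hh => hsx hh.1), zero_mul]
        · refine mul_eq_zero.2 (Or.inr ?_)
          rw [PMF.map_apply]
          refine ENNReal.tsum_eq_zero.2 fun y => ?_
          rw [if_neg]
          simp only [Prod.mk.injEq, not_and]
          intro _ h
          rw [List.cons.injEq] at h
          exact h2 h.2.symm)]
      rw [IH, PMF.map_apply]
      rw [tsum_eq_single y0 (by
        intro y hy
        rw [if_neg]
        simp only [Prod.mk.injEq, not_and]
        intro _ h
        rw [List.cons.injEq] at h
        exact hy h.1.symm)]
      have hpar : par k n (y0 :: x1 :: l'')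
          = if dlb k n (par k n (x1 :: l'')) ≤ dlb k n y0 then y0 else par k n (x1 :: l'') := by
        rw [par]
      have hq : q k n (y0 :: x1 :: l'')
          = mutatePMF n (par k n (x1 :: l'')) y0 * q k n (x1 :: l'') := by
        rw [q]
      simp only [Prod.mk.injEq, eq_self_iff_true, true_and, and_true, ← hpar]
      by_cases hlen : (x1 :: l'').length = T + 1
      · rw [if_pos hlen]
        by_cases hx : x = par k n (y0 :: x1 :: l'')
        · rw [if_pos hx, if_pos ⟨hx, by simp only [List.length_cons] at hlen ⊢; omega⟩, hq,
            mul_comm]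
        · rw [if_neg hx, if_neg (fun hh => hx hh.1), mul_zero]
      · rw [if_neg hlen, zero_mul,
          if_neg (fun hh => hlen (by simp only [List.length_cons] at hh ⊢; omega))]

lemma prOf_darwinHist (k n : ℕ) (T : ℕ) (P : List (BitStr n) → Prop) [DecidablePred P] :
    prOf (darwinHist k n T) {s : BitStr n × List (BitStr n) | P s.2} =
      ∑' l : List (BitStr n), if P l ∧ l.length = T + 1 then q k n l else 0 := by
  rw [prOf, ENNReal.tsum_prod', ENNReal.tsum_comm]
  refine tsum_congr fun l => ?_
  rw [tsum_eq_single (par k n l) (by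
    intro x hx
    by_cases hm : P l
    · rw [Set.indicator_of_mem (by exact hm), darwinHist_apply, if_neg (fun hh => hx hh.1)]
    · exact Set.indicator_of_notMem (by exact hm) _)]
  by_cases hP : P l
  · rw [Set.indicator_of_mem (by exact hP), darwinHist_apply]
    by_cases hlen : l.length = T + 1
    · rw [if_pos ⟨rfl, hlen⟩, if_pos ⟨hP, hlen⟩]
    · rw [if_neg (fun hh => hlen hh.2), if_neg (fun hh => hlen hh.2)]
  · rw [Set.indicator_of_notMem (by exact hP), if_neg (fun hh => hP hh.1)]


def Good {n : ℕ} (k j : ℕ) (x : BitStr n) : Prop := ∀ i : Fin n, i.1 < j * k → x i = true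

def flp {n : ℕ} (c x : BitStr n) : BitStr n := fun i => xor (x i) (c i)

lemma flp_flp {n : ℕ} (c x : BitStr n) : flp c (flp c x) = x := by
  funext i; cases h1 : x i <;> cases h2 : c i <;> simp [flp, h1, h2]

variable {k n j : ℕ} {c : BitStr n}

section withhc
variable (hc : ∀ i : Fin n, c i = true → j * k ≤ i.1 ∧ i.1 < j * k + k)

include hc

lemma flp_lt (x : BitStr n) (i : Fin n) (h : i.1 < j * k) : flp c x i = x i := by
  have hci : c i = false := by
    cases h' : c i
    · rfl
    · exact absurd ((hc i h').1) (by omega)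
  simp [flp, hci]

lemma good_flp (x : BitStr n) : Good k j (flp c x) ↔ Good k j x := by
  constructor <;> intro h i hi
  · have := h i hi; rwa [flp_lt hc x i hi] at this
  · rw [flp_lt hc x i hi]; exact h i hi

lemma blockOnes_flp (x : BitStr n) {ℓ : ℕ} (hℓ : ℓ < j) :
    blockOnes k n (flp c x) ℓ = blockOnes k n x ℓ := by
  unfold blockOnes
  congr 1
  apply Finset.filter_congr
  intro i _
  constructor <;> rintro ⟨h1, h2, h3⟩ <;> refine ⟨h1, h2, ?_⟩
  · rwa [flp_lt hc x i (by nlinarith)] at h3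
  · rwa [flp_lt hc x i (by nlinarith)]

end withhc

lemma card_block {a : ℕ} (ha : a + k ≤ n) :
    (Finset.univ.filter fun i : Fin n => a ≤ i.1 ∧ i.1 < a + k).card = k := by
  have : (Finset.univ.filter fun i : Fin n => a ≤ i.1 ∧ i.1 < a + k)
      = Finset.image (fun m : Fin k => (⟨a + m.1, by omega⟩ : Fin n)) Finset.univ := by
    ext i
    simp only [Finset.mem_filter, Finset.mem_univ, true_and, Finset.mem_image]
    constructor
    · rintro ⟨h1, h2⟩
      refine ⟨⟨i.1 - a, by omega⟩, ?_⟩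
      apply Fin.ext
      simp only []
      show a + (i.1 - a) = i.1
      omega
    · rintro ⟨m, rfl⟩
      exact ⟨by simp, by simp⟩
  rw [this, Finset.card_image_of_injective _ (fun m m' h => by
    apply Fin.ext
    have := congrArg Fin.val h
    simpa using this), Finset.card_univ, Fintype.card_fin]

lemma blockOnes_le_of_false {x : BitStr n} {i : Fin n} (hx : x i = false)
    {ℓ : ℕ} (hl : ℓ * k ≤ i.1) (hr : i.1 < ℓ * k + k) (hn : ℓ * k + k ≤ n) :
    blockOnes k n x ℓ ≠ k := by
  have hsub : (Finset.univ.filter fun m : Fin n => ℓ * k ≤ m.1 ∧ m.1 < ℓ * k + k ∧ x m = true)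
      ⊆ (Finset.univ.filter fun m : Fin n => ℓ * k ≤ m.1 ∧ m.1 < ℓ * k + k).erase i := by
    intro m hm
    simp only [Finset.mem_filter, Finset.mem_univ, true_and] at hm
    rw [Finset.mem_erase]
    refine ⟨?_, by simp [hm.1, hm.2.1]⟩
    rintro rfl
    rw [hx] at hm
    exact Bool.false_ne_true hm.2.2
  have h1 : blockOnes k n x ℓ ≤ k - 1 := by
    have := Finset.card_le_card hsub
    rwa [Finset.card_erase_of_mem (by simp [hl, hr]), card_block hn] at this
  have hk : 0 < k := by
    rcases Nat.eq_zero_or_pos k with h | h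
    · omega
    · exact h
  omega

lemma exists_bad_block {x : BitStr n} (hx : ¬ Good k j x) (hk : 0 < k) (hjk : j * k ≤ n) :
    ∃ ℓ < j, blockOnes k n x ℓ ≠ k := by
  unfold Good at hx
  push_neg at hx
  obtain ⟨i, hi, hxi⟩ := hx
  replace hxi : x i = false := by
    cases h : x i
    · rfl
    · exact absurd h hxi
  refine ⟨i.1 / k, (Nat.div_lt_iff_lt_mul hk).2 hi, ?_⟩
  have h1 : i.1 / k * k ≤ i.1 := Nat.div_mul_le_self _ _
  have h2 : i.1 < i.1 / k * k + k := by
    have := Nat.mod_lt i.1 hk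
    calc i.1 = k * (i.1 / k) + i.1 % k := (Nat.div_add_mod i.1 k).symm
      _ < k * (i.1 / k) + k := by omega
      _ = i.1 / k * k + k := by ring
  refine blockOnes_le_of_false hxi h1 h2 ?_
  have h3 : i.1 / k < j := (Nat.div_lt_iff_lt_mul hk).2 hi
  calc i.1 / k * k + k = (i.1 / k + 1) * k := by ring
    _ ≤ j * k := Nat.mul_le_mul_right _ (by omega)
    _ ≤ n := hjk

lemma lead_le_aux {x y : BitStr n}
    (heq : ∀ ℓ < j, blockOnes k n y ℓ = blockOnes k n x ℓ)
    {ℓ0 : ℕ} (hℓ0 : ℓ0 < j) (hbad : blockOnes k n x ℓ0 ≠ k) :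
    leadBlocks k n y ≤ leadBlocks k n x := by
  set L := leadBlocks k n y with hL
  have hPy : ∀ ℓ < L, blockOnes k n y ℓ = k :=
    Nat.findGreatest_spec (P := fun j' => ∀ ℓ < j', blockOnes k n y ℓ = k)
      (Nat.zero_le _) (by omega)
  have hLl : L ≤ ℓ0 := by
    by_contra h
    exact hbad (heq ℓ0 hℓ0 ▸ hPy ℓ0 (by omega))
  have hPx : ∀ ℓ < L, blockOnes k n x ℓ = k := fun ℓ hℓ =>
    (heq ℓ (by omega)).symm.trans (hPy ℓ hℓ)
  exact Nat.le_findGreatest (hL ▸ Nat.findGreatest_le (n / k)) hPx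

lemma lead_lt {x : BitStr n} (hx : ¬ Good k j x) (hk : 0 < k) (hjk : j * k ≤ n) :
    leadBlocks k n x < j := by
  obtain ⟨ℓ0, hℓ0, hbad⟩ := exists_bad_block hx hk hjk
  have hPx : ∀ ℓ < leadBlocks k n x, blockOnes k n x ℓ = k :=
    Nat.findGreatest_spec (P := fun j' => ∀ ℓ < j', blockOnes k n x ℓ = k)
      (Nat.zero_le _) (by omega)
  by_contra h
  exact hbad (hPx ℓ0 (by omega))

lemma dlb_flp (hc : ∀ i : Fin n, c i = true → j * k ≤ i.1 ∧ i.1 < j * k + k)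
    {x : BitStr n} (hx : ¬ Good k j x) (hk : 0 < k) (hjk : j * k ≤ n) :
    dlb k n (flp c x) = dlb k n x := by
  obtain ⟨ℓ0, hℓ0, hbad⟩ := exists_bad_block hx hk hjk
  obtain ⟨i0, hi0, hxi0⟩ := by
    unfold Good at hx; push_neg at hx; exact hx
  have hxa : x ≠ allOnes n := by
    intro h; rw [h] at hxi0; exact hxi0 rfl
  have hfa : flp c x ≠ allOnes n := by
    intro h
    have := congrFun h i0
    rw [flp_lt hc x i0 hi0] at this
    exact hxi0 this
  have hlead : leadBlocks k n (flp c x) = leadBlocks k n x := by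
    apply le_antisymm
    · exact lead_le_aux (fun ℓ hℓ => blockOnes_flp hc x hℓ) hℓ0 hbad
    · refine lead_le_aux (fun ℓ hℓ => (blockOnes_flp hc x hℓ).symm) hℓ0 ?_
      rw [blockOnes_flp hc x hℓ0]; exact hbad
  have hlt : leadBlocks k n x < j := lead_lt hx hk hjk
  rw [dlb, dlb, if_neg hfa, if_neg hxa, hlead, blockOnes_flp hc x hlt]


lemma mutatePMF_flp (c x y : BitStr n) :
    mutatePMF n (flp c x) (flp c y) = mutatePMF n x y := by
  rw [mutatePMF_apply, mutatePMF_apply]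
  refine Finset.prod_congr rfl fun i _ => ?_
  have hb : ∀ a bb cc : Bool, ((xor a cc = xor bb cc)) = (a = bb) := by decide
  simp only [flp, hb]

lemma par_flp (hc : ∀ i : Fin n, c i = true → j * k ≤ i.1 ∧ i.1 < j * k + k)
    (hk : 0 < k) (hjk : j * k ≤ n) :
    ∀ (y : BitStr n) (l : List (BitStr n)), (∀ z ∈ y :: l, ¬ Good k j z) →
      par k n ((y :: l).map (flp c)) = flp c (par k n (y :: l))
  | y, [], _ => by simp [par]
  | y, x :: l, h => by
      simp only [List.map_cons]
      have h1 : par k n (flp c y :: flp c x :: l.map (flp c))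
          = if dlb k n (par k n (flp c x :: l.map (flp c))) ≤ dlb k n (flp c y)
            then flp c y else par k n (flp c x :: l.map (flp c)) := by rw [par]
      have h2 : par k n (y :: x :: l)
          = if dlb k n (par k n (x :: l)) ≤ dlb k n y then y else par k n (x :: l) := by
        rw [par]
      rw [h1, h2,
        show (flp c x :: l.map (flp c)) = ((x :: l).map (flp c)) from by simp,
        par_flp hc hk hjk x l (fun z hz => h z (List.mem_cons_of_mem _ hz)),
        dlb_flp hc (h _ (List.mem_cons_of_mem _ (par_mem k n (x :: l) (by simp)))) hk hjk,
        dlb_flp hc (h y List.mem_cons_self) hk hjk,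
        apply_ite (flp c)]

lemma q_flp (hc : ∀ i : Fin n, c i = true → j * k ≤ i.1 ∧ i.1 < j * k + k)
    (hk : 0 < k) (hjk : j * k ≤ n) :
    ∀ (y : BitStr n) (l : List (BitStr n)), (∀ z ∈ l, ¬ Good k j z) →
      q k n ((y :: l).map (flp c)) = q k n (y :: l)
  | y, [], _ => by simp [q]
  | y, x :: l, h => by
      simp only [List.map_cons]
      have h1 : q k n (flp c y :: flp c x :: l.map (flp c))
          = mutatePMF n (par k n (flp c x :: l.map (flp c))) (flp c y)
            * q k n (flp c x :: l.map (flp c)) := by rw [q]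
      have h2 : q k n (y :: x :: l)
          = mutatePMF n (par k n (x :: l)) y * q k n (x :: l) := by rw [q]
      rw [h1, h2,
        show (flp c x :: l.map (flp c)) = ((x :: l).map (flp c)) from by simp,
        par_flp hc hk hjk x l h,
        q_flp hc hk hjk x l (fun z hz => h z (List.mem_cons_of_mem _ hz)),
        mutatePMF_flp]

def PB (k n j : ℕ) (l : List (BitStr n)) : Prop :=
  ∃ y rest, l = y :: rest ∧ Good k j y ∧ (∀ z ∈ rest, ¬ Good k j z)

def PA (k n j : ℕ) (p : BitStr n) (l : List (BitStr n)) : Prop :=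
  ∃ y rest, l = y :: rest ∧ Good k j y ∧ (∀ z ∈ rest, ¬ Good k j z) ∧
    (∀ i : Fin n, j * k ≤ i.1 → i.1 < j * k + k → y i = p i)

def cmask (k j : ℕ) {n : ℕ} (p b : BitStr n) : BitStr n :=
  fun i => if j * k ≤ i.1 ∧ i.1 < j * k + k then xor (p i) (b i) else false

lemma cmask_spec (p b : BitStr n) :
    ∀ i : Fin n, cmask k j p b i = true → j * k ≤ i.1 ∧ i.1 < j * k + k := by
  intro i h
  by_cases hcond : j * k ≤ i.1 ∧ i.1 < j * k + k
  · exact hcond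
  · rw [cmask, if_neg hcond] at h
    exact absurd h (by simp)

lemma cmask_in (p b : BitStr n) {i : Fin n} (h1 : j * k ≤ i.1) (h2 : i.1 < j * k + k) :
    cmask k j p b i = xor (p i) (b i) := by
  rw [cmask, if_pos ⟨h1, h2⟩]

lemma A_map_iff (p b : BitStr n) (l : List (BitStr n)) :
    PA k n j b (l.map (flp (cmask k j p b))) ↔ PA k n j p l := by
  have hc := cmask_spec (k := k) (j := j) p b
  set c := cmask k j p b with hcdef
  cases l with
  | nil =>
    constructor
    · rintro ⟨y, rest, h, -⟩; exact absurd h (by simp)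
    · rintro ⟨y, rest, h, -⟩; exact absurd h (by simp)
  | cons y rest =>
    simp only [List.map_cons]
    have hkey : ∀ a pp bb : Bool, (xor a (xor pp bb) = bb) ↔ (a = pp) := by decide
    constructor
    · rintro ⟨y', rest', heq, hg, hr, hp⟩
      rw [List.cons.injEq] at heq
      obtain ⟨h1, h2⟩ := heq
      subst h1; subst h2
      refine ⟨y, rest, rfl, (good_flp hc y).1 hg, ?_, ?_⟩
      · intro z hz hGz
        exact hr (flp c z) (List.mem_map_of_mem hz) ((good_flp hc z).2 hGz)
      · intro i hi1 hi2
        have hv := hp i hi1 hi2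
        have hci : c i = xor (p i) (b i) := cmask_in p b hi1 hi2
        have hv' : xor (y i) (xor (p i) (b i)) = b i := by
          rw [← hci]; exact hv
        exact (hkey _ _ _).1 hv'
    · rintro ⟨y', rest', heq, hg, hr, hp⟩
      rw [List.cons.injEq] at heq
      obtain ⟨h1, h2⟩ := heq
      subst h1; subst h2
      refine ⟨flp c y, rest.map (flp c), rfl, (good_flp hc y).2 hg, ?_, ?_⟩
      · intro z hz
        rw [List.mem_map] at hz
        obtain ⟨w, hw, rfl⟩ := hz
        intro hG
        exact hr w hw ((good_flp hc w).1 hG)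
      · intro i hi1 hi2
        have hci : c i = xor (p i) (b i) := cmask_in p b hi1 hi2
        show xor (y i) (c i) = b i
        rw [hp i hi1 hi2, hci]
        cases p i <;> cases b i <;> rfl

lemma sum_A_flip (hk : 0 < k) (hjk : j * k ≤ n) (p b : BitStr n) (m : ℕ)
    [DecidablePred (PA k n j p)] [DecidablePred (PA k n j b)] :
    (∑' l : List (BitStr n), if PA k n j p l ∧ l.length = m then q k n l else 0)
      = ∑' l : List (BitStr n), if PA k n j b l ∧ l.length = m then q k n l else 0 := by
  have hc := cmask_spec (k := k) (j := j) p b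
  set c := cmask k j p b with hcdef
  have hinv : Function.Involutive (List.map (flp c)) := by
    intro l
    rw [List.map_map, show flp c ∘ flp c = id from funext (flp_flp c), List.map_id]
  rw [← Equiv.tsum_eq (hinv.toPerm _)
    (fun l => if PA k n j b l ∧ l.length = m then q k n l else 0)]
  refine tsum_congr fun l => ?_
  show _ = (if PA k n j b (List.map (flp c) l) ∧ (List.map (flp c) l).length = m then q k n (List.map (flp c) l) else 0)
  by_cases h : PA k n j p l ∧ l.length = m
  · rw [if_pos h, if_pos ⟨(A_map_iff p b l).2 h.1, by rw [List.length_map]; exact h.2⟩]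
    obtain ⟨y, rest, rfl, -, hr, -⟩ := h.1
    exact (q_flp hc hk hjk y rest hr).symm
  · rw [if_neg h, if_neg (by
      rintro ⟨h1, h2⟩
      exact h ⟨(A_map_iff p b l).1 h1, by rwa [List.length_map] at h2⟩)]

def patExt (k j : ℕ) {n : ℕ} (u : Fin k → Bool) : BitStr n :=
  fun i => if h : j * k ≤ i.1 ∧ i.1 < j * k + k then u ⟨i.1 - j * k, by omega⟩ else false

lemma B_decomp [DecidablePred (PB k n j)] [∀ p : BitStr n, DecidablePred (PA k n j p)]
    (hjk2 : j * k + k ≤ n) (l : List (BitStr n)) (m : ℕ) :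
    (if PB k n j l ∧ l.length = m then q k n l else 0)
      = ∑ u : Fin k → Bool,
          if PA k n j (patExt k j u) l ∧ l.length = m then q k n l else 0 := by
  by_cases hB : PB k n j l ∧ l.length = m
  · obtain ⟨⟨y, rest, rfl, hg, hr⟩, hlen⟩ := hB
    set u0 : Fin k → Bool := fun mm => y ⟨j * k + mm.1, by have := mm.2; omega⟩ with hu0
    have hiff : ∀ u : Fin k → Bool,
        (PA k n j (patExt k j u) (y :: rest) ∧ (y :: rest).length = m) ↔ u = u0 := by
      intro u
      constructor
      · rintro ⟨⟨y', rest', heq, hg', hr', hp⟩, -⟩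
        rw [List.cons.injEq] at heq
        obtain ⟨h1, h2⟩ := heq
        subst h1; subst h2
        funext mm
        have hmm := mm.2
        have hlt : j * k + mm.1 < n := by omega
        have hval := hp ⟨j * k + mm.1, hlt⟩ (Nat.le_add_right _ _)
          (Nat.add_lt_add_left hmm _)
        have hpe : patExt k j (n := n) u ⟨j * k + mm.1, hlt⟩ = u mm := by
          rw [patExt, dif_pos ⟨Nat.le_add_right _ _, Nat.add_lt_add_left hmm _⟩]
          congr 1
          apply Fin.ext
          simp
        rw [hu0]
        rw [hpe] at hval
        exact hval.symm
      · rintro rfl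
        refine ⟨⟨y, rest, rfl, hg, hr, ?_⟩, hlen⟩
        intro i h1 h2
        rw [patExt, dif_pos ⟨h1, h2⟩, hu0]
        congr 1
        apply Fin.ext
        show i.1 = j * k + (i.1 - j * k)
        omega
    rw [if_pos ⟨⟨y, rest, rfl, hg, hr⟩, hlen⟩,
      Finset.sum_congr rfl (fun u _ => if_congr (hiff u) rfl rfl),
      Finset.sum_ite_eq' Finset.univ u0 (fun _ => q k n (y :: rest)),
      if_pos (Finset.mem_univ _)]
  · rw [if_neg hB]
    symm
    refine Finset.sum_eq_zero fun u _ => ?_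
    rw [if_neg]
    rintro ⟨⟨y, rest, heq, hg, hr, -⟩, hlen⟩
    exact hB ⟨⟨y, rest, heq, hg, hr⟩, hlen⟩

end DFH

/-- Consider the Darwinian (1+1) EA on `DLB_k` and `j ∈ [0 .. n/k - 1]`.  Let `X`
be the first individual generated (initial individual or mutation offspring) that
has at least `j` leading all-ones blocks.  Conditional on `X` having at least `j`
leading all-ones blocks, the `k` bits of `X` at positions `jk, …, jk + k - 1`
(`0`-indexed) are independent and uniform: for every horizon `T` and every pattern
`b`, the probability that the most recently generated individual is the first one
with at least `j` leading all-ones blocks *and* realises the pattern `b` on these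
`k` positions equals `2^{-k}` times the probability that it is the first one with
at least `j` leading all-ones blocks.  In particular these `k` bits are all zero
with conditional probability `2^{-k}`. -/
theorem darwin_first_hit_block_uniform (k n : ℕ) (hk : 2 ≤ k) (hn : 0 < n)
    (hdvd : k ∣ n) (j : ℕ) (hj : j < n / k) (T : ℕ) (b : Fin n → Bool) :
    prOf (darwinHist k n T)
        {s | ∃ y rest, s.2 = y :: rest ∧
          (∀ i : Fin n, i.1 < j * k → y i = true) ∧
          (∀ z ∈ rest, ¬ ∀ i : Fin n, i.1 < j * k → z i = true) ∧
          (∀ i : Fin n, j * k ≤ i.1 → i.1 < j * k + k → y i = b i)}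
      = ((2 : ℝ≥0∞) ^ k)⁻¹ *
        prOf (darwinHist k n T)
          {s | ∃ y rest, s.2 = y :: rest ∧
            (∀ i : Fin n, i.1 < j * k → y i = true) ∧
            (∀ z ∈ rest, ¬ ∀ i : Fin n, i.1 < j * k → z i = true)} := by
  classical
  have hk0 : 0 < k := by omega
  have hjk2 : j * k + k ≤ n := by
    have h2 : n / k * k = n := Nat.div_mul_cancel hdvd
    have h1 : (j + 1) * k ≤ n / k * k := Nat.mul_le_mul_right _ (by omega)
    calc j * k + k = (j + 1) * k := by ring
      _ ≤ n / k * k := h1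
      _ = n := h2
  have hjk : j * k ≤ n := by omega
  have eA : prOf (darwinHist k n T)
        {s | ∃ y rest, s.2 = y :: rest ∧
          (∀ i : Fin n, i.1 < j * k → y i = true) ∧
          (∀ z ∈ rest, ¬ ∀ i : Fin n, i.1 < j * k → z i = true) ∧
          (∀ i : Fin n, j * k ≤ i.1 → i.1 < j * k + k → y i = b i)}
      = ∑' l : List (BitStr n),
          if DFH.PA k n j b l ∧ l.length = T + 1 then DFH.q k n l else 0 :=
    DFH.prOf_darwinHist k n T (DFH.PA k n j b)
  have eB : prOf (darwinHist k n T)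
        {s | ∃ y rest, s.2 = y :: rest ∧
          (∀ i : Fin n, i.1 < j * k → y i = true) ∧
          (∀ z ∈ rest, ¬ ∀ i : Fin n, i.1 < j * k → z i = true)}
      = ∑' l : List (BitStr n),
          if DFH.PB k n j l ∧ l.length = T + 1 then DFH.q k n l else 0 :=
    DFH.prOf_darwinHist k n T (DFH.PB k n j)
  rw [eA, eB]
  have e2 : (∑' l : List (BitStr n),
        if DFH.PB k n j l ∧ l.length = T + 1 then DFH.q k n l else 0)
      = ∑ u : Fin k → Bool, ∑' l : List (BitStr n),
          if DFH.PA k n j (DFH.patExt k j u) l ∧ l.length = T + 1 then DFH.q k n l else 0 := by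
    calc (∑' l : List (BitStr n),
          if DFH.PB k n j l ∧ l.length = T + 1 then DFH.q k n l else 0)
        = ∑' l : List (BitStr n), ∑ u : Fin k → Bool,
            if DFH.PA k n j (DFH.patExt k j u) l ∧ l.length = T + 1 then DFH.q k n l else 0 :=
          tsum_congr fun l => DFH.B_decomp hjk2 l (T + 1)
      _ = ∑ u : Fin k → Bool, ∑' l : List (BitStr n),
            if DFH.PA k n j (DFH.patExt k j u) l ∧ l.length = T + 1 then DFH.q k n l else 0 :=
          Summable.tsum_finsetSum fun u _ => ENNReal.summable
  rw [e2,
    Finset.sum_congr rfl (fun u _ => DFH.sum_A_flip hk0 hjk (DFH.patExt k j u) b (T + 1)),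
    Finset.sum_const, Finset.card_univ]
  have hcard : Fintype.card (Fin k → Bool) = 2 ^ k := by
    simp [Fintype.card_fun]
  rw [hcard, nsmul_eq_mul, Nat.cast_pow, Nat.cast_ofNat, ← mul_assoc,
    ENNReal.inv_mul_cancel (pow_ne_zero _ two_ne_zero)
      (ENNReal.pow_ne_top ENNReal.ofNat_ne_top), one_mul]


end
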